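/- arXiv:1703.07327 — 11 statements merged into one kernel-verified Lean document; each statement's English description precedes it below -/
import Mathlib

section
/- Let (X,d) be a metric space. Then U(X) is closed under products (i.e., U(X) is a ring) if and only if every subset A ⊆ X that is not Bourbaki-bounded contains an infinite uniformly isolated subset. -/
/-- `A` is a Bourbaki-bounded subset of `X`: every uniformly continuous
real-valued function on `X` is bounded on `A`. -/
def IsBourbakiBoundedSubset {X : Type*} [MetricSpace X] (A : Set X) : Prop :=
  ∀ f : X → ℝ, UniformContinuous f → ∃ C : ℝ, ∀ x ∈ A, |f x| ≤ C

/-- `A` is uniformly isolated: there is `ε > 0` with `dist a x ≥ ε` for every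
`a ∈ A` and every `x ∈ X` with `x ≠ a`. -/
def IsUniformlyIsolated {X : Type*} [MetricSpace X] (A : Set X) : Prop :=
  ∃ ε : ℝ, 0 < ε ∧ ∀ a ∈ A, ∀ x : X, x ≠ a → ε ≤ dist a x

/-!
If `f, g ∈ U(X)` but `f * g` is not uniformly continuous, there are pairs `x n, y n` with
`d(x n, y n) → 0` on which `f * g` oscillates by a fixed `ε`. As `f` and `g` would be bounded on a
Bourbaki-bounded set, the `x n` range over a set that is not Bourbaki-bounded, and an infinite
uniformly isolated subset of it would force `x n = y n` for some `n`.

Conversely, let `f ∈ U(X)` be unbounded on `A` while every uniformly isolated subset of `A` is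
finite. Then points of `A` with arbitrarily large `f`-value have arbitrarily close neighbours,
which yields `a n, b n` with `d(a n, b n) → 0`, `f (a n) ≥ n + 2` and `f (a n)` increasing in steps
of at least `1`, so that the `a n` are uniformly separated. The supremum `g` of the tents of height
`1 / f (a n)` and radius `2 d(a n, b n)` around `a n` is uniformly continuous because the heights
tend to `0`, yet `f * g` equals `1` at `a n` and is at most `3 / 4` at `b n`.
-/

open Filter Topology Set

theorem Set.Infinite.frequently_mem {α : Type*} {B : Set α} (hB : B.Infinite) {x : ℕ → α}
    (hBx : B ⊆ range x) : ∃ᶠ n in atTop, x n ∈ B :=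
  Nat.frequently_atTop_iff_infinite.2 (hB.preimage hBx)

section Sequences

variable {X Y : Type*} [PseudoMetricSpace X] [PseudoMetricSpace Y]

theorem UniformContinuous.tendsto_dist_comp {h : X → Y} (hh : UniformContinuous h)
    {x y : ℕ → X} (hxy : Tendsto (fun n => dist (x n) (y n)) atTop (𝓝 0)) :
    Tendsto (fun n => dist (h (x n)) (h (y n))) atTop (𝓝 0) :=
  tendsto_uniformity_iff_dist_tendsto_zero.1 <|
    Tendsto.comp hh (tendsto_uniformity_iff_dist_tendsto_zero (f := fun n => (x n, y n)).2 hxy)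

theorem not_uniformContinuous_iff_exists_seq {h : X → Y} :
    ¬ UniformContinuous h ↔ ∃ ε > 0, ∃ x y : ℕ → X,
      Tendsto (fun n => dist (x n) (y n)) atTop (𝓝 0) ∧ ∀ n, ε ≤ dist (h (x n)) (h (y n)) := by
  constructor
  · intro hh
    obtain ⟨ε, hε, hbad⟩ : ∃ ε > 0, ∀ δ > 0, ∃ x y, dist x y < δ ∧ ε ≤ dist (h x) (h y) := by
      simpa [Metric.uniformContinuous_iff] using hh
    choose x y hxy hε' using fun n : ℕ => hbad (1 / (n + 1)) Nat.one_div_pos_of_nat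
    refine ⟨ε, hε, x, y, ?_, hε'⟩
    exact squeeze_zero (fun _ => dist_nonneg) (fun n => (hxy n).le)
      tendsto_one_div_add_atTop_nhds_zero_nat
  · rintro ⟨ε, hε, x, y, hxy, hε'⟩ hh
    obtain ⟨n, hn⟩ := ((hh.tendsto_dist_comp hxy).eventually (gt_mem_nhds hε)).exists
    exact (hε' n).not_gt hn

end Sequences

theorem add_sub_le_of_forall_add_one_le {t : ℕ → ℝ} (h : ∀ n, t n + 1 ≤ t (n + 1)) {m n : ℕ}
    (hmn : m ≤ n) : t m + (n - m) ≤ t n := by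
  have := monotone_nat_of_le_succ (f := fun k => t k - k)
    (fun k => by push_cast; linarith [h k]) hmn
  simp only at this
  linarith

theorem exists_seq_nonisolated {X : Type*} [PseudoMetricSpace X] {f : X → ℝ} {ε : ℕ → ℝ}
    (H : ∀ (n : ℕ) (M : ℝ), ∃ a, M < f a ∧ ∃ b ≠ a, dist a b < ε n) :
    ∃ a b : ℕ → X, (∀ n : ℕ, (n : ℝ) + 2 ≤ f (a n)) ∧ (∀ m n, m < n → f (a m) + 1 ≤ f (a n)) ∧
      ∀ n, b n ≠ a n ∧ dist (a n) (b n) < ε n := by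
  choose p hp q hqp hpq using H
  -- `a n := p n (M n)` is chosen above the threshold `M n`, where `M (n + 1) = f (a n) + 1`
  let M : ℕ → ℝ := fun n => Nat.rec 2 (fun k Mk => f (p k Mk) + 1) n
  have hgap : ∀ n, f (p n (M n)) + 1 ≤ f (p (n + 1) (M (n + 1))) := fun n => (hp _ _).le
  refine ⟨fun n => p n (M n), fun n => q n (M n), fun n => ?_, fun m n hmn => ?_,
    fun n => ⟨hqp _ _, hpq _ _⟩⟩
  · have := add_sub_le_of_forall_add_one_le hgap (Nat.zero_le n)
    have h0 : 2 < f (p 0 (M 0)) := hp 0 2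
    push_cast at this
    linarith
  · have := add_sub_le_of_forall_add_one_le hgap hmn.le
    have : (1 : ℝ) ≤ n - m := by
      rw [le_sub_iff_add_le']; exact_mod_cast hmn
    linarith

theorem UniformEquicontinuous.uniformContinuous_ciSup {ι X : Type*} [Nonempty ι]
    [PseudoMetricSpace X] {F : ι → X → ℝ} (hF : UniformEquicontinuous F)
    (hbdd : ∀ x, BddAbove (range fun i => F i x)) :
    UniformContinuous fun x => ⨆ i, F i x := by
  refine Metric.uniformContinuous_iff.2 fun ε hε => ?_
  obtain ⟨δ, hδ, hF⟩ := Metric.uniformEquicontinuous_iff.1 hF (ε / 2) (half_pos hε)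
  have hle : ∀ x y, dist x y < δ → ⨆ i, F i x ≤ (⨆ i, F i y) + ε / 2 := fun x y hxy =>
    ciSup_le fun i => by linarith [(abs_sub_lt_iff.1 (hF x y hxy i)).1, le_ciSup (hbdd y) i]
  refine ⟨δ, hδ, fun {x y} hxy => ?_⟩
  rw [Real.dist_eq, abs_sub_lt_iff]
  constructor <;> linarith [hle x y hxy, hle y x (dist_comm x y ▸ hxy)]

theorem uniformEquicontinuous_of_tendsto_cofinite {ι X : Type*} [UniformSpace X]
    {F : ι → X → ℝ} (hF : ∀ i, UniformContinuous (F i)) {c : ι → ℝ}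
    (hc : Tendsto c cofinite (𝓝 0)) (hFc : ∀ i x, |F i x| ≤ c i) :
    UniformEquicontinuous F := by
  refine Metric.uniformEquicontinuous_iff_right.2 fun ε hε => ?_
  have hfin : {i | ¬ c i < ε / 2}.Finite := eventually_cofinite.1 (hc (gt_mem_nhds (half_pos hε)))
  filter_upwards [(eventually_all_finite hfin).2 fun i _ => hF i (Metric.dist_mem_uniformity hε)]
    with p hp i
  by_cases hi : c i < ε / 2
  · calc dist (F i p.1) (F i p.2) ≤ |F i p.1| + |F i p.2| := by
          rw [Real.dist_eq]; exact abs_sub _ _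
      _ < ε := by linarith [hFc i p.1, hFc i p.2]
  · exact hp i hi

section Tent

variable {X : Type*} [PseudoMetricSpace X]

noncomputable def tent (a : X) (r : ℝ) (z : X) : ℝ := max 0 (1 - dist z a / r)

theorem tent_self (a : X) (r : ℝ) : tent a r a = 1 := by simp [tent]

theorem tent_nonneg (a : X) (r : ℝ) (z : X) : 0 ≤ tent a r z := le_max_left _ _

theorem tent_le_one (a : X) {r : ℝ} (hr : 0 ≤ r) (z : X) : tent a r z ≤ 1 :=
  max_le zero_le_one (sub_le_self _ (div_nonneg dist_nonneg hr))

theorem tent_eq_of_dist_le {a z : X} {r : ℝ} (h : dist z a ≤ r) :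
    tent a r z = 1 - dist z a / r :=
  max_eq_right (sub_nonneg.2 (div_le_one_of_le₀ h (dist_nonneg.trans h)))

theorem tent_eq_zero_of_le_dist {a z : X} {r : ℝ} (hr : 0 < r) (h : r ≤ dist z a) :
    tent a r z = 0 :=
  max_eq_left (sub_nonpos.2 ((one_le_div hr).2 h))

theorem uniformContinuous_tent (a : X) (r : ℝ) : UniformContinuous (tent a r) :=
  lipschitzWith_max.uniformContinuous.comp <| uniformContinuous_const.prodMk <|
    uniformContinuous_const.sub <| (uniformContinuous_id.dist uniformContinuous_const).div_const' r

end Tent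

section BumpSup

variable {ι X : Type*} [PseudoMetricSpace X] (a : ι → X) (r c : ι → ℝ)

noncomputable def bumpSup (z : X) : ℝ := ⨆ i, c i * tent (a i) (r i) z

variable {a r c}

theorem bddAbove_range_mul_tent (hc : BddAbove (range c)) (hc0 : ∀ i, 0 ≤ c i) (hr : ∀ i, 0 ≤ r i)
    (z : X) : BddAbove (range fun i => c i * tent (a i) (r i) z) := by
  obtain ⟨C, hC⟩ := hc
  refine ⟨C, forall_mem_range.2 fun i => ?_⟩
  calc c i * tent (a i) (r i) z ≤ c i * 1 := by gcongr; exacts [hc0 i, tent_le_one _ (hr i) _]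
    _ ≤ C := by simpa using hC (mem_range_self i)

theorem uniformContinuous_bumpSup [Nonempty ι] (hc : Tendsto c cofinite (𝓝 0))
    (hc0 : ∀ i, 0 ≤ c i) (hr : ∀ i, 0 ≤ r i) : UniformContinuous (bumpSup a r c) := by
  refine UniformEquicontinuous.uniformContinuous_ciSup ?_
    (bddAbove_range_mul_tent hc.bddAbove_range_of_cofinite hc0 hr)
  refine uniformEquicontinuous_of_tendsto_cofinite
    (fun i => (uniformContinuous_tent _ _).const_mul' (c i)) hc fun i z => ?_
  rw [abs_of_nonneg (mul_nonneg (hc0 i) (tent_nonneg _ _ _))]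
  exact mul_le_of_le_one_right (hc0 i) (tent_le_one _ (hr i) _)

theorem bumpSup_eq_of_forall_ne {z : X} {i : ι} (hc0 : ∀ j, 0 ≤ c j) (hr : ∀ j, 0 < r j)
    (hz : ∀ j ≠ i, r j ≤ dist z (a j)) : bumpSup a r c z = c i * tent (a i) (r i) z := by
  have hle : ∀ j, c j * tent (a j) (r j) z ≤ c i * tent (a i) (r i) z := fun j => by
    rcases eq_or_ne j i with rfl | hj
    · exact le_rfl
    · rw [tent_eq_zero_of_le_dist (hr j) (hz j hj), mul_zero]
      exact mul_nonneg (hc0 i) (tent_nonneg _ _ _)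
  have : Nonempty ι := ⟨i⟩
  exact le_antisymm (ciSup_le hle) (le_ciSup ⟨_, forall_mem_range.2 hle⟩ i)

end BumpSup

section Isolated

variable {X : Type*} [MetricSpace X]

theorem IsUniformlyIsolated.eventually_eq {B : Set X} (hB : IsUniformlyIsolated B)
    {x y : ℕ → X} (hxy : Tendsto (fun n => dist (x n) (y n)) atTop (𝓝 0)) :
    ∀ᶠ n in atTop, x n ∈ B → y n = x n := by
  obtain ⟨ε, hε, hiso⟩ := hB
  filter_upwards [hxy.eventually (gt_mem_nhds hε)] with n hn hxn
  by_contra hne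
  exact (hiso _ hxn _ hne).not_gt hn

theorem IsBourbakiBoundedSubset.tendsto_dist_mul {x y : ℕ → X}
    (hx : IsBourbakiBoundedSubset (range x))
    (hxy : Tendsto (fun n => dist (x n) (y n)) atTop (𝓝 0))
    {f g : X → ℝ} (hf : UniformContinuous f) (hg : UniformContinuous g) :
    Tendsto (fun n => dist (f (x n) * g (x n)) (f (y n) * g (y n))) atTop (𝓝 0) := by
  have bdd : ∀ {u : X → ℝ}, UniformContinuous u →
      IsBoundedUnder (· ≤ ·) atTop (norm ∘ fun n => u (x n)) := fun hu => by
    obtain ⟨C, hC⟩ := hx _ hu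
    exact isBoundedUnder_of ⟨C, fun n => hC _ (mem_range_self n)⟩
  have diff : ∀ {u : X → ℝ}, UniformContinuous u →
      Tendsto (fun n => u (x n) - u (y n)) atTop (𝓝 0) := fun hu =>
    tendsto_iff_dist_tendsto_zero.2 (by simpa [Real.dist_eq] using hu.tendsto_dist_comp hxy)
  -- fx gx - fy gy = fx (gx - gy) + (fx - fy) gx - (fx - fy)(gx - gy)
  have key := ((isBoundedUnder_le_mul_tendsto_zero (bdd hf) (diff hg)).add
    ((diff hf).zero_mul_isBoundedUnder_le (bdd hg))).sub ((diff hf).mul (diff hg))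
  simp only [add_zero, mul_zero, sub_zero] at key
  simpa [Real.dist_eq] using (key.congr fun n => by ring).abs

end Isolated

theorem uniformContinuous_mul_of_forall_exists_infinite_isolated {X : Type*} [MetricSpace X]
    (h : ∀ A : Set X, ¬ IsBourbakiBoundedSubset A → ∃ B ⊆ A, B.Infinite ∧ IsUniformlyIsolated B)
    {f g : X → ℝ} (hf : UniformContinuous f) (hg : UniformContinuous g) :
    UniformContinuous (fun x => f x * g x) := by
  by_contra hfg
  obtain ⟨ε, hε, x, y, hxy, hε'⟩ := not_uniformContinuous_iff_exists_seq.1 hfg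
  have hx : ¬ IsBourbakiBoundedSubset (range x) := fun hx => by
    obtain ⟨n, hn⟩ := ((hx.tendsto_dist_mul hxy hf hg).eventually (gt_mem_nhds hε)).exists
    exact (hε' n).not_gt hn
  obtain ⟨B, hBx, hB, hiso⟩ := h _ hx
  obtain ⟨n, hxn, hyn⟩ := ((hB.frequently_mem hBx).and_eventually (hiso.eventually_eq hxy)).exists
  have := hε' n
  rw [hyn hxn, dist_self] at this
  exact this.not_gt hε

section Construction

variable {X : Type*} [MetricSpace X]

theorem exists_lt_and_nonisolated {A : Set X} (hA : ∀ B ⊆ A, IsUniformlyIsolated B → B.Finite)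
    {f : X → ℝ} (hf : ¬ BddAbove (f '' A)) {ε : ℝ} (hε : 0 < ε) (M : ℝ) :
    ∃ a, M < f a ∧ ∃ b ≠ a, dist a b < ε := by
  set I := {a ∈ A | ∀ x, x ≠ a → ε ≤ dist a x}
  obtain ⟨C, hC⟩ := ((hA I (sep_subset _ _) ⟨ε, hε, fun a ha => ha.2⟩).image f).bddAbove
  obtain ⟨_, ⟨a, ha, rfl⟩, hMa⟩ := not_bddAbove_iff.1 hf (max M C)
  have hnot : ¬ ∀ x, x ≠ a → ε ≤ dist a x := fun hiso =>
    (hC (mem_image_of_mem f ⟨ha, hiso⟩)).not_gt ((le_max_right M C).trans_lt hMa)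
  push Not at hnot
  exact ⟨a, (le_max_left M C).trans_lt hMa, hnot⟩

theorem exists_uniformContinuous_eq_on_seq {a b : ℕ → X} {δ : ℝ}
    (hsep : ∀ m n, m ≠ n → δ ≤ dist (a m) (a n)) (hab : ∀ n, b n ≠ a n)
    (hδ : ∀ n, dist (a n) (b n) < δ / 4) {c : ℕ → ℝ} (hc0 : ∀ n, 0 ≤ c n)
    (hc : Tendsto c atTop (𝓝 0)) :
    ∃ g : X → ℝ, UniformContinuous g ∧ ∀ n, g (a n) = c n ∧ g (b n) = c n / 2 := by
  have hd : ∀ n, 0 < dist (a n) (b n) := fun n => dist_pos.2 (hab n).symm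
  have hr : ∀ n, 0 < 2 * dist (a n) (b n) := fun n => by linarith [hd n]
  refine ⟨bumpSup a (fun n => 2 * dist (a n) (b n)) c,
    uniformContinuous_bumpSup (Nat.cofinite_eq_atTop ▸ hc) hc0 fun n => (hr n).le, fun n => ?_⟩
  have houtside : ∀ z, dist z (a n) < δ / 4 → ∀ m ≠ n, 2 * dist (a m) (b m) ≤ dist z (a m) := by
    intro z hz m hmn
    linarith [hsep m n hmn, dist_triangle_left (a m) (a n) z, hδ m, hd m]
  constructor
  · rw [bumpSup_eq_of_forall_ne hc0 hr (houtside _ (by simpa using (hd n).trans (hδ n))),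
      tent_self, mul_one]
  · have hbn : dist (b n) (a n) = dist (a n) (b n) := dist_comm _ _
    rw [bumpSup_eq_of_forall_ne hc0 hr (houtside _ (hbn ▸ hδ n)),
      tent_eq_of_dist_le (by linarith [hd n]), hbn]
    field_simp [(hd n).ne']
    ring

theorem exists_not_uniformContinuous_mul_of_seq {f : X → ℝ} {δ : ℝ}
    (hfδ : ∀ ⦃x y⦄, dist x y < δ → dist (f x) (f y) < 1) {a b : ℕ → X}
    (hgrow : ∀ n : ℕ, (n : ℝ) + 2 ≤ f (a n)) (hgap : ∀ m n, m < n → f (a m) + 1 ≤ f (a n))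
    (hab : ∀ n, b n ≠ a n) (hδ : ∀ n, dist (a n) (b n) < δ / 4)
    (hab0 : Tendsto (fun n => dist (a n) (b n)) atTop (𝓝 0)) :
    ∃ g : X → ℝ, UniformContinuous g ∧ ¬ UniformContinuous fun x => f x * g x := by
  have ht : ∀ n, 2 ≤ f (a n) := fun n => by linarith [hgrow n, n.cast_nonneg (α := ℝ)]
  have hsep : ∀ m n, m ≠ n → δ ≤ dist (a m) (a n) := by
    suffices ∀ m n, m < n → δ ≤ dist (a m) (a n) from fun m n hmn =>
      hmn.lt_or_gt.elim (this m n) fun h => dist_comm (a m) (a n) ▸ this n m h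
    intro m n hmn
    by_contra! h
    have := hfδ h
    rw [Real.dist_eq, abs_sub_lt_iff] at this
    linarith [hgap m n hmn]
  have hc : Tendsto (fun n => (f (a n))⁻¹) atTop (𝓝 0) :=
    tendsto_inv_atTop_zero.comp <|
      tendsto_atTop_mono (fun n => by linarith [hgrow n]) tendsto_natCast_atTop_atTop
  obtain ⟨g, hg, hgab⟩ := exists_uniformContinuous_eq_on_seq hsep hab hδ
    (fun n => (inv_pos.2 (by linarith [ht n])).le) hc
  refine ⟨g, hg, not_uniformContinuous_iff_exists_seq.2
    ⟨1 / 4, by norm_num, a, b, hab0, fun n => ?_⟩⟩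
  have hfb : f (b n) ≤ f (a n) + 1 := by
    have := hfδ (x := a n) (y := b n) (by linarith [hδ n, dist_nonneg (x := a n) (y := b n)])
    rw [Real.dist_eq, abs_sub_lt_iff] at this
    linarith
  have hfgb : f (b n) * ((f (a n))⁻¹ / 2) ≤ 3 / 4 := by
    rw [show f (b n) * ((f (a n))⁻¹ / 2) = f (b n) / (2 * f (a n)) by ring,
      div_le_iff₀ (by linarith [ht n])]
    linarith [ht n]
  rw [(hgab n).1, (hgab n).2, Real.dist_eq, mul_inv_cancel₀ (by linarith [ht n])]
  linarith [le_abs_self (1 - f (b n) * ((f (a n))⁻¹ / 2))]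

theorem exists_uniformContinuous_not_bddAbove {A : Set X} (hA : ¬ IsBourbakiBoundedSubset A) :
    ∃ f : X → ℝ, UniformContinuous f ∧ ¬ BddAbove (f '' A) := by
  simp only [IsBourbakiBoundedSubset] at hA
  push Not at hA
  obtain ⟨f, hf, hfA⟩ := hA
  refine ⟨fun x => |f x|, Real.uniformContinuous_abs.comp hf, fun ⟨C, hC⟩ => ?_⟩
  obtain ⟨x, hx, hCx⟩ := hfA C
  exact (hC (mem_image_of_mem _ hx)).not_gt hCx

theorem exists_infinite_isUniformlyIsolated_of_uniformContinuous_mul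
    (h : ∀ f g : X → ℝ, UniformContinuous f → UniformContinuous g →
      UniformContinuous (fun x => f x * g x))
    {A : Set X} (hA : ¬ IsBourbakiBoundedSubset A) :
    ∃ B ⊆ A, B.Infinite ∧ IsUniformlyIsolated B := by
  by_contra! hno
  have hfin : ∀ B ⊆ A, IsUniformlyIsolated B → B.Finite := fun B hBA hB =>
    not_not.1 fun hinf => hno B hBA hinf hB
  obtain ⟨f, hf, hfA⟩ := exists_uniformContinuous_not_bddAbove hA
  obtain ⟨δ, hδ, hfδ⟩ := Metric.uniformContinuous_iff.1 hf 1 one_pos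
  obtain ⟨a, b, hgrow, hgap, hab⟩ :=
    exists_seq_nonisolated (ε := fun n => min (δ / 4) (1 / (n + 1))) fun n =>
      exists_lt_and_nonisolated hfin hfA (lt_min (by positivity) Nat.one_div_pos_of_nat)
  obtain ⟨g, hg, hfg⟩ := exists_not_uniformContinuous_mul_of_seq hfδ hgrow hgap
    (fun n => (hab n).1) (fun n => (hab n).2.trans_le (min_le_left _ _))
    (squeeze_zero (fun _ => dist_nonneg) (fun n => ((hab n).2.trans_le (min_le_right _ _)).le)
      tendsto_one_div_add_atTop_nhds_zero_nat)
  exact hfg (h f g hf hg)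

end Construction

/-- `U(X)` is a ring (closed under products) iff every non-Bourbaki-bounded
subset of `X` contains an infinite uniformly isolated subset. -/
theorem UX_ring_iff {X : Type*} [MetricSpace X] :
    (∀ f g : X → ℝ, UniformContinuous f → UniformContinuous g →
      UniformContinuous (fun x => f x * g x)) ↔
    (∀ A : Set X, ¬ IsBourbakiBoundedSubset A →
      ∃ B ⊆ A, B.Infinite ∧ IsUniformlyIsolated B) :=
  ⟨fun h _ hA => exists_infinite_isUniformlyIsolated_of_uniformContinuous_mul h hA,
    fun h _ _ hf hg => uniformContinuous_mul_of_forall_exists_infinite_isolated h hf hg⟩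
end

section
/- Let (X,d) be a metric space. If every subset A ⊆ X that is not Bourbaki-bounded contains an infinite uniformly isolated subset, then the product of any two uniformly continuous real-valued functions on X is uniformly continuous (i.e., U(X) is a ring). -/
open Filter Topology Set

section

variable {X : Type*} [MetricSpace X]

theorem not_isBourbakiBoundedSubset_range_of_tendsto {x : ℕ → X} {h : X → ℝ}
    (hh : UniformContinuous h) (hx : Tendsto (h ∘ x) atTop atTop) :
    ¬ IsBourbakiBoundedSubset (range x) := by
  intro hbdd
  obtain ⟨C, hC⟩ := hbdd h hh
  obtain ⟨n, hn⟩ := (hx.eventually_gt_atTop C).exists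
  exact (hn.trans_le (le_abs_self _)).not_ge (hC _ (mem_range_self n))

theorem IsUniformlyIsolated.finite_of_subset_range {B : Set X} (hB : IsUniformlyIsolated B)
    {x y : ℕ → X} (hxy : ∀ n, x n ≠ y n)
    (hdist : Tendsto (fun n => dist (x n) (y n)) atTop (𝓝 0)) (hBx : B ⊆ range x) :
    B.Finite := by
  obtain ⟨ε, hε, hiso⟩ := hB
  have hfar : {n | ε ≤ dist (x n) (y n)}.Finite := by
    have hnear := hdist.eventually (gt_mem_nhds hε)
    rw [← Nat.cofinite_eq_atTop, eventually_cofinite] at hnear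
    simpa only [not_lt] using hnear
  refine (hfar.image x).subset fun b hb => ?_
  obtain ⟨n, rfl⟩ := hBx hb
  exact ⟨n, hiso _ hb _ (hxy n).symm, rfl⟩

theorem UniformContinuous.exists_pos_forall_dist_mul_lt {f g : X → ℝ}
    (hf : UniformContinuous f) (hg : UniformContinuous g) (M : ℝ) {ε : ℝ} (hε : 0 < ε) :
    ∃ δ > 0, ∀ x y, |f x| + |g x| ≤ M → dist x y < δ →
      dist (f x * g x) (f y * g y) < ε := by
  set η := min 1 (ε / (2 * |M| + 2))
  have hη : 0 < η := lt_min one_pos (by positivity)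
  obtain ⟨δf, hδf, hf'⟩ := Metric.uniformContinuous_iff.mp hf η hη
  obtain ⟨δg, hδg, hg'⟩ := Metric.uniformContinuous_iff.mp hg η hη
  refine ⟨min δf δg, lt_min hδf hδg, fun x y hM hxy => ?_⟩
  have hfx : |f x| ≤ |M| := by linarith [abs_nonneg (g x), le_abs_self M]
  have hgx : |g x| ≤ |M| := by linarith [abs_nonneg (f x), le_abs_self M]
  have hdf : |f x - f y| < η := hf' (hxy.trans_le (min_le_left _ _))
  have hdg : |g x - g y| < η := hg' (hxy.trans_le (min_le_right _ _))
  calc dist (f x * g x) (f y * g y)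
      = |f x * (g x - g y) + (f x - f y) * g x - (f x - f y) * (g x - g y)| := by
        rw [Real.dist_eq]; ring_nf
    _ ≤ |f x| * |g x - g y| + |f x - f y| * |g x| + |f x - f y| * |g x - g y| := by
        rw [← abs_mul, ← abs_mul, ← abs_mul]
        exact (abs_sub _ _).trans (add_le_add_left (abs_add_le _ _) _)
    _ ≤ |M| * η + η * |M| + η * 1 := by
        have hη1 : η ≤ 1 := min_le_left _ _
        gcongr; linarith
    _ < (2 * |M| + 2) * η := by nlinarith
    _ ≤ ε := by
        rw [← le_div_iff₀' (by positivity)]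
        exact min_le_right _ _

theorem exists_seq_of_not_uniformContinuous_mul {f g : X → ℝ}
    (hf : UniformContinuous f) (hg : UniformContinuous g)
    (hfg : ¬ UniformContinuous (fun x => f x * g x)) :
    ∃ x y : ℕ → X, (∀ n, x n ≠ y n) ∧ Tendsto (fun n => dist (x n) (y n)) atTop (𝓝 0) ∧
      ∀ n : ℕ, (n : ℝ) < |f (x n)| + |g (x n)| := by
  rw [Metric.uniformContinuous_iff] at hfg
  push Not at hfg
  obtain ⟨ε, hε, hbad⟩ := hfg
  have hpair : ∀ n : ℕ, ∃ x y, dist x y < 1 / (n + 1) ∧ x ≠ y ∧ (n : ℝ) < |f x| + |g x| := by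
    intro n
    obtain ⟨δ, hδ, hgood⟩ := hf.exists_pos_forall_dist_mul_lt hg n hε
    obtain ⟨x, y, hxy, hjump⟩ := hbad (min δ (1 / (n + 1))) (lt_min hδ (by positivity))
    refine ⟨x, y, hxy.trans_le (min_le_right _ _), ?_, ?_⟩
    · rintro rfl
      exact (dist_self (f x * g x)).not_gt (hε.trans_le hjump)
    · by_contra! hM
      exact (hgood x y hM (hxy.trans_le (min_le_left _ _))).not_ge hjump
  choose x y hdist hne hlarge using hpair
  refine ⟨x, y, hne, ?_, hlarge⟩
  exact squeeze_zero (fun _ => dist_nonneg) (fun n => (hdist n).le)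
    tendsto_one_div_add_atTop_nhds_zero_nat

end

/-- If every non-Bourbaki-bounded subset of `X` contains an infinite uniformly
isolated subset, then the product of any two uniformly continuous real-valued
functions on `X` is uniformly continuous (`U(X)` is a ring). -/
theorem ring_of_infinite_unifIsolated {X : Type*} [MetricSpace X]
    (h : ∀ A : Set X, ¬ IsBourbakiBoundedSubset A →
      ∃ B ⊆ A, B.Infinite ∧ IsUniformlyIsolated B) :
    ∀ f g : X → ℝ, UniformContinuous f → UniformContinuous g →
      UniformContinuous (fun x => f x * g x) := by
  intro f g hf hg
  by_contra hfg
  obtain ⟨x, y, hne, hdist, hlarge⟩ := exists_seq_of_not_uniformContinuous_mul hf hg hfg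
  have hunbdd : ¬ IsBourbakiBoundedSubset (range x) :=
    not_isBourbakiBoundedSubset_range_of_tendsto
      ((Real.uniformContinuous_abs.comp hf).add (Real.uniformContinuous_abs.comp hg))
      (tendsto_atTop_mono (fun n => (hlarge n).le) tendsto_natCast_atTop_atTop)
  obtain ⟨B, hBx, hBinf, hBiso⟩ := h _ hunbdd
  exact hBinf (hBiso.finite_of_subset_range hne hdist hBx)
end

section
/- Let (X,d) be a metric space. Suppose there exists a Bourbaki-bounded subset F ⊆ X such that for every γ > 0 the set X ∖ F^γ = {x ∈ X : d(x,F) > γ} is uniformly isolated. Then the product of any two uniformly continuous real-valued functions on X is uniformly continuous (i.e., U(X) is a ring). -/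
open Set Metric Bornology

/-!
A uniformly continuous function bounded on `F` stays bounded on some thickening of `F`, and a
product of bounded uniformly continuous functions is uniformly continuous; so `f * g` is uniformly
continuous on a small closed thickening `F^γ`. Points outside `F^γ` have no other points within a
fixed distance, so uniform continuity on `F^γ` already gives uniform continuity on `X`.
-/

theorem IsBourbakiBoundedSubset.isBounded_image {X : Type*} [MetricSpace X] {F : Set X}
    (hF : IsBourbakiBoundedSubset F) {f : X → ℝ} (hf : UniformContinuous f) :
    IsBounded (f '' F) :=
  let ⟨C, hC⟩ := hF f hf
  isBounded_iff_forall_norm_le.2 ⟨C, forall_mem_image.2 hC⟩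

theorem UniformContinuous.exists_isBounded_image_thickening {X Y : Type*} [PseudoMetricSpace X]
    [PseudoMetricSpace Y] {f : X → Y} (hf : UniformContinuous f) {F : Set X}
    (hF : IsBounded (f '' F)) : ∃ δ > 0, IsBounded (f '' thickening δ F) := by
  obtain ⟨δ, hδ, hfδ⟩ := Metric.uniformContinuous_iff.1 hf 1 one_pos
  refine ⟨δ, hδ, (hF.thickening (δ := 1)).subset ?_⟩
  rintro _ ⟨x, hx, rfl⟩
  obtain ⟨y, hy, hxy⟩ := mem_thickening_iff.1 hx
  exact mem_thickening_iff.2 ⟨f y, mem_image_of_mem f hy, hfδ hxy⟩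

theorem UniformContinuousOn.mul_of_isBounded_image {X R : Type*} [UniformSpace X]
    [SeminormedRing R] {S : Set X} {f g : X → R} (hf : UniformContinuousOn f S)
    (hg : UniformContinuousOn g S) (hfS : IsBounded (f '' S)) (hgS : IsBounded (g '' S)) :
    UniformContinuousOn (fun x => f x * g x) S := by
  have hpair : UniformContinuousOn (fun x => (f x, g x)) S := by
    rw [uniformContinuousOn_iff_restrict] at hf hg ⊢
    exact hf.prodMk hg
  exact (hfS.prod hgS).uniformContinuousOn_smul.comp hpair
    fun x hx => ⟨mem_image_of_mem f hx, mem_image_of_mem g hx⟩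

theorem UniformContinuousOn.uniformContinuous_of_isUniformlyIsolated_compl {X Y : Type*}
    [MetricSpace X] [PseudoMetricSpace Y] {h : X → Y} {S : Set X} (hS : UniformContinuousOn h S)
    (hiso : IsUniformlyIsolated Sᶜ) : UniformContinuous h := by
  obtain ⟨ε₀, hε₀, hsep⟩ := hiso
  have eq_of_dist_lt : ∀ a ∉ S, ∀ b, dist a b < ε₀ → a = b := fun a ha b hab => by
    by_contra hne
    exact (hsep a ha b (Ne.symm hne)).not_gt hab
  rw [Metric.uniformContinuous_iff]
  intro ε hε
  obtain ⟨δ, hδ, hδS⟩ := Metric.uniformContinuousOn_iff.1 hS ε hε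
  refine ⟨min δ ε₀, lt_min hδ hε₀, fun {x y} hxy => ?_⟩
  have hxy₀ : dist x y < ε₀ := hxy.trans_le (min_le_right _ _)
  by_cases hx : x ∈ S
  · by_cases hy : y ∈ S
    · exact hδS x hx y hy (hxy.trans_le (min_le_left _ _))
    · rw [eq_of_dist_lt y hy x (dist_comm x y ▸ hxy₀), dist_self]
      exact hε
  · rw [eq_of_dist_lt x hx y hxy₀, dist_self]
    exact hε

/-- If there is a Bourbaki-bounded subset `F ⊆ X` such that for every `γ > 0`
the set `X \ F^γ = {x : d(x,F) > γ}` is uniformly isolated (the distance to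
`F` is computed in `[0,∞]`, so that it is `∞` when `F = ∅`), then the product
of any two uniformly continuous real-valued functions on `X` is uniformly
continuous (`U(X)` is a ring). -/
theorem ring_of_BB_core {X : Type*} [MetricSpace X]
    (F : Set X) (hF : IsBourbakiBoundedSubset F)
    (hiso : ∀ γ : ℝ, 0 < γ →
      IsUniformlyIsolated {x : X | ENNReal.ofReal γ < EMetric.infEdist x F}) :
    ∀ f g : X → ℝ, UniformContinuous f → UniformContinuous g →
      UniformContinuous (fun x => f x * g x) := by
  intro f g hf hg
  obtain ⟨δf, hδf, hfb⟩ := hf.exists_isBounded_image_thickening (hF.isBounded_image hf)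
  obtain ⟨δg, hδg, hgb⟩ := hg.exists_isBounded_image_thickening (hF.isBounded_image hg)
  set δ := min δf δg
  have hδ : 0 < δ := lt_min hδf hδg
  have hnear : cthickening (δ / 2) F ⊆ thickening δ F :=
    cthickening_subset_thickening' hδ (half_lt_self hδ) F
  have hfar : IsUniformlyIsolated (cthickening (δ / 2) F)ᶜ := by
    convert hiso (δ / 2) (half_pos hδ) using 2
    ext x
    exact not_le (α := ENNReal)
  refine UniformContinuousOn.uniformContinuous_of_isUniformlyIsolated_compl ?_ hfar
  exact hf.uniformContinuousOn.mul_of_isBounded_image hg.uniformContinuousOn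
    (hfb.subset (image_mono (hnear.trans (thickening_mono (min_le_left _ _) F))))
    (hgb.subset (image_mono (hnear.trans (thickening_mono (min_le_right _ _) F))))
end

section
/- If (x_n) and (y_n) are sequences in a metric space X satisfying d(x_n, x_m) ≥ ε > 0 for all n ≠ m and 0 < d(y_n, x_n) ≤ min{ε/3, 1/n} for every n, and (α_n) is a real sequence converging to 0, then the function g₀ defined on {x_n : n ∈ ℕ} ∪ {y_n : n ∈ ℕ} by g₀(x_n) = α_n and g₀(y_n) = 0 is uniformly continuous (on that subspace). -/
open Filter Topology

lemma exists_mem_pair_of_mem_range_union {ι X : Type*} {x y : ι → X} {u : X}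
    (hu : u ∈ Set.range x ∪ Set.range y) : ∃ n, u ∈ ({x n, y n} : Set X) := by
  rcases hu with ⟨n, rfl⟩ | ⟨n, rfl⟩ <;> exact ⟨n, by simp⟩

lemma Set.Finite.exists_pos_forall_le {ι : Type*} {s : Set ι} (hs : s.Finite) {d : ι → ℝ}
    (hd : ∀ i ∈ s, 0 < d i) : ∃ δ, 0 < δ ∧ ∀ i ∈ s, δ ≤ d i := by
  have hle : ∀ᶠ δ in 𝓝 0, ∀ i ∈ s, δ ≤ d i :=
    hs.eventually_all.mpr fun i hi => eventually_le_nhds (hd i hi)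
  obtain ⟨δ, hδs, hδ⟩ :=
    ((hle.filter_mono nhdsWithin_le_nhds).and (self_mem_nhdsWithin (s := Set.Ioi 0))).exists
  exact ⟨δ, hδ, hδs⟩

section PairSeparation

variable {X β ι : Type*} [PseudoMetricSpace X] [PseudoMetricSpace β]

lemma eq_or_dist_eq_of_mem_pair {a b u v : X} (hu : u ∈ ({a, b} : Set X))
    (hv : v ∈ ({a, b} : Set X)) : u = v ∨ dist u v = dist a b := by
  rcases hu with rfl | rfl <;> rcases hv with rfl | rfl <;> simp [dist_comm]

lemma dist_le_of_mem_pair {a b u v : X} (hu : u ∈ ({a, b} : Set X))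
    (hv : v ∈ ({a, b} : Set X)) : dist u v ≤ dist a b := by
  rcases eq_or_dist_eq_of_mem_pair hu hv with rfl | h
  · simp
  · exact h.le

lemma sub_two_mul_le_dist_of_mem_pair {x y : ι → X} {ε r : ℝ}
    (hsep : ∀ n m, n ≠ m → ε ≤ dist (x n) (x m)) (hr : ∀ n, dist (y n) (x n) ≤ r)
    {n m : ι} (hnm : n ≠ m) {u v : X} (hu : u ∈ ({x n, y n} : Set X))
    (hv : v ∈ ({x m, y m} : Set X)) : ε - 2 * r ≤ dist u v := by
  have near : ∀ k, ∀ w ∈ ({x k, y k} : Set X), dist w (x k) ≤ r := by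
    rintro k w (rfl | rfl)
    · simpa using dist_nonneg.trans (hr k)
    · exact hr k
  have := dist_triangle4 (x n) u v (x m)
  linarith [hsep n m hnm, dist_comm u (x n), near n u hu, near m v hv]

/-- Given `η`, only finitely many pairs have oscillation `≥ η`; taking `δ` below both the
separation `c` and the diameters of those pairs, `dist u v < δ` forces `u = v` or `{u, v}` to be a
pair of small oscillation. -/
theorem uniformContinuousOn_range_union_range {x y : ι → X} {f : X → β} {c : ℝ} (hc : 0 < c)
    (hsep : ∀ n m, n ≠ m → ∀ u ∈ ({x n, y n} : Set X), ∀ v ∈ ({x m, y m} : Set X),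
      c ≤ dist u v)
    (hne : ∀ n, 0 < dist (x n) (y n))
    (hf : Tendsto (fun n => dist (f (x n)) (f (y n))) cofinite (𝓝 0)) :
    UniformContinuousOn f (Set.range x ∪ Set.range y) := by
  rw [Metric.uniformContinuousOn_iff]
  intro η hη
  have hbad : {n | ¬ dist (f (x n)) (f (y n)) < η}.Finite :=
    eventually_cofinite.mp (hf.eventually (gt_mem_nhds hη))
  obtain ⟨δ₀, hδ₀, hδbad⟩ := hbad.exists_pos_forall_le fun n _ => hne n
  set δ := min c δ₀
  have hδc : δ ≤ c := min_le_left _ _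
  refine ⟨δ, lt_min hc hδ₀, fun u hu v hv huv => ?_⟩
  obtain ⟨n, hu⟩ := exists_mem_pair_of_mem_range_union hu
  obtain ⟨m, hv⟩ := exists_mem_pair_of_mem_range_union hv
  obtain rfl : n = m := by
    by_contra hnm
    exact (hsep n m hnm u hu v hv).not_gt (huv.trans_le hδc)
  rcases eq_or_dist_eq_of_mem_pair hu hv with rfl | hdist
  · simpa using hη
  · have hgood : dist (f (x n)) (f (y n)) < η := by
      by_contra hn
      exact ((min_le_right _ _).trans (hδbad n hn)).not_gt (hdist ▸ huv)
    have hfu : f u ∈ ({f (x n), f (y n)} : Set β) :=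
      Set.image_pair f _ _ ▸ Set.mem_image_of_mem f hu
    have hfv : f v ∈ ({f (x n), f (y n)} : Set β) :=
      Set.image_pair f _ _ ▸ Set.mem_image_of_mem f hv
    exact (dist_le_of_mem_pair hfu hfv).trans_lt hgood

end PairSeparation

/-- If `(x_n)` is `ε`-separated, `0 < d(y_n, x_n) ≤ min (ε/3) (1/n)` (indices
starting at 1, i.e. `1/(n+1)` for `n : ℕ`), and `α_n → 0`, then any function
equal to `α_n` at `x_n` and `0` at `y_n` is uniformly continuous on
`{x_n} ∪ {y_n}`. -/
theorem uniformContinuousOn_of_separated {X : Type*} [MetricSpace X]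
    (x y : ℕ → X) (ε : ℝ) (hε : 0 < ε)
    (hsep : ∀ n m : ℕ, n ≠ m → ε ≤ dist (x n) (x m))
    (hclose : ∀ n : ℕ, 0 < dist (y n) (x n) ∧
      dist (y n) (x n) ≤ min (ε / 3) (1 / (n + 1 : ℝ)))
    (α : ℕ → ℝ) (hα : Tendsto α atTop (nhds 0))
    (g : X → ℝ) (hgx : ∀ n, g (x n) = α n) (hgy : ∀ n, g (y n) = 0) :
    UniformContinuousOn g (Set.range x ∪ Set.range y) := by
  have hr : ∀ n, dist (y n) (x n) ≤ ε / 3 := fun n => (hclose n).2.trans (min_le_left _ _)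
  have hpairs : ∀ n m, n ≠ m → ∀ u ∈ ({x n, y n} : Set X), ∀ v ∈ ({x m, y m} : Set X),
      ε / 3 ≤ dist u v := fun n m hnm u hu v hv => by
    linarith [sub_two_mul_le_dist_of_mem_pair hsep hr hnm hu hv]
  have hosc : Tendsto (fun n => dist (g (x n)) (g (y n))) cofinite (𝓝 0) := by
    simpa [Nat.cofinite_eq_atTop, hgx, hgy] using hα.abs
  exact uniformContinuousOn_range_union_range (by positivity) hpairs
    (fun n => dist_comm (x n) (y n) ▸ (hclose n).1) hosc
end

section
/- For every subset A of a metric space X and every bounded uniformly continuous function f₀ : A → ℝ, there exists a bounded uniformly continuous function f : X → ℝ with f restricted to A equal to f₀. -/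
/-!
For each `ε > 0`, uniform continuity and boundedness give `f₀ a - f₀ b ≤ ε + K_ε d(a, b)`. The
infimum `ω` of these affine bounds over `ε` is a subadditive modulus of continuity of `f₀`, so the
McShane inf-convolution `x ↦ inf_a (f₀ a + ω (d(x, a)))` extends `f₀` with the same modulus.
Truncating it at `±C` makes it bounded without changing it on `A`.
-/

open Set

structure IsSubadditiveModulus (ω : ℝ → ℝ) : Prop where
  nonneg : ∀ t, 0 ≤ t → 0 ≤ ω t
  monotoneOn : MonotoneOn ω (Ici 0)
  add_le : ∀ s t, 0 ≤ s → 0 ≤ t → ω (s + t) ≤ ω s + ω t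
  exists_lt : ∀ ε > 0, ∃ δ > 0, ω δ < ε

namespace IsSubadditiveModulus

variable {ω : ℝ → ℝ}

lemma apply_zero (hω : IsSubadditiveModulus ω) : ω 0 = 0 := by
  refine le_antisymm (le_of_forall_pos_lt_add fun ε hε => ?_) (hω.nonneg 0 le_rfl)
  obtain ⟨δ, hδ, hωδ⟩ := hω.exists_lt ε hε
  simpa using (hω.monotoneOn (mem_Ici.mpr le_rfl) hδ.le hδ.le).trans_lt hωδ

lemma uniformContinuous_of_dist_le {α β : Type*} [PseudoMetricSpace α] [PseudoMetricSpace β]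
    (hω : IsSubadditiveModulus ω) {f : α → β} (hf : ∀ x y, dist (f x) (f y) ≤ ω (dist x y)) :
    UniformContinuous f := by
  refine Metric.uniformContinuous_iff.mpr fun ε hε => ?_
  obtain ⟨δ, hδ, hωδ⟩ := hω.exists_lt ε hε
  exact ⟨δ, hδ, fun {_ _} hxy => (hf _ _).trans_lt
    ((hω.monotoneOn dist_nonneg hδ.le hxy.le).trans_lt hωδ)⟩

lemma apply_dist_le_add {X : Type*} [PseudoMetricSpace X]
    (hω : IsSubadditiveModulus ω) (x y z : X) :
    ω (dist x z) ≤ ω (dist x y) + ω (dist y z) :=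
  (hω.monotoneOn dist_nonneg (add_nonneg dist_nonneg dist_nonneg) (dist_triangle x y z)).trans
    (hω.add_le _ _ dist_nonneg dist_nonneg)

end IsSubadditiveModulus

noncomputable def affineInf {ι : Type*} (c K : ι → ℝ) (t : ℝ) : ℝ := ⨅ i, c i + K i * t

section affineInf

variable {ι : Type*} {c K : ι → ℝ}

lemma bddBelow_range_affine (hc : ∀ i, 0 ≤ c i) (hK : ∀ i, 0 ≤ K i) {t : ℝ} (ht : 0 ≤ t) :
    BddBelow (range fun i => c i + K i * t) :=
  ⟨0, forall_mem_range.mpr fun i => add_nonneg (hc i) (mul_nonneg (hK i) ht)⟩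

lemma isSubadditiveModulus_affineInf [Nonempty ι] (hc : ∀ i, 0 ≤ c i) (hK : ∀ i, 0 ≤ K i)
    (hc_small : ∀ ε > 0, ∃ i, c i < ε) : IsSubadditiveModulus (affineInf c K) where
  nonneg t ht := le_ciInf fun i => add_nonneg (hc i) (mul_nonneg (hK i) ht)
  monotoneOn s hs t _ hst := ciInf_mono (bddBelow_range_affine hc hK hs) fun i =>
    add_le_add_right (mul_le_mul_of_nonneg_left hst (hK i)) _
  add_le s t hs ht := by
    -- pair the `i`-th bound at `s` with the `j`-th at `t` and use whichever slope is smaller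
    have hst := bddBelow_range_affine hc hK (add_nonneg hs ht)
    refine le_ciInf_add_ciInf fun i j => ?_
    rcases le_total (K i) (K j) with hij | hji
    · calc affineInf c K (s + t) ≤ c i + K i * (s + t) := ciInf_le hst i
        _ ≤ c i + K i * s + (c j + K j * t) := by nlinarith [hc j]
    · calc affineInf c K (s + t) ≤ c j + K j * (s + t) := ciInf_le hst j
        _ ≤ c i + K i * s + (c j + K j * t) := by nlinarith [hc i]
  exists_lt ε hε := by
    obtain ⟨i, hi⟩ := hc_small ε hε
    have hK1 : 0 < K i + 1 := by linarith [hK i]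
    set δ := (ε - c i) / (K i + 1)
    have hδ : 0 < δ := div_pos (by linarith) hK1
    have hKδ : (K i + 1) * δ = ε - c i := mul_div_cancel₀ _ hK1.ne'
    refine ⟨δ, hδ, ?_⟩
    calc affineInf c K δ ≤ c i + K i * δ := ciInf_le (bddBelow_range_affine hc hK hδ.le) i
      _ < ε := by linarith

end affineInf

lemma UniformContinuous.exists_le_add_mul_dist {α : Type*} [PseudoMetricSpace α] {f : α → ℝ}
    (hf : UniformContinuous f) {D : ℝ} (hD : ∀ a b, f a - f b ≤ D) {ε : ℝ} (hε : 0 < ε) :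
    ∃ K, 0 ≤ K ∧ ∀ a b, f a - f b ≤ ε + K * dist a b := by
  obtain ⟨δ, hδ, hfδ⟩ := Metric.uniformContinuous_iff.mp hf ε hε
  refine ⟨|D| / δ, by positivity, fun a b => ?_⟩
  have hKd : 0 ≤ |D| / δ * dist a b := by positivity
  rcases lt_or_ge (dist a b) δ with hab | hab
  · have := (abs_lt.mp (hfδ hab)).2
    linarith
  · calc f a - f b ≤ |D| := (hD a b).trans (le_abs_self D)
      _ = |D| / δ * δ := (div_mul_cancel₀ _ hδ.ne').symm
      _ ≤ |D| / δ * dist a b := by gcongr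
      _ ≤ ε + |D| / δ * dist a b := by linarith

lemma UniformContinuous.exists_isSubadditiveModulus {α : Type*} [PseudoMetricSpace α]
    {f : α → ℝ} (hf : UniformContinuous f) {D : ℝ} (hD : ∀ a b, f a - f b ≤ D) :
    ∃ ω, IsSubadditiveModulus ω ∧ ∀ a b, f a - f b ≤ ω (dist a b) := by
  choose K hK0 hK using fun ε : Ioi (0 : ℝ) => hf.exists_le_add_mul_dist hD ε.2
  refine ⟨affineInf (fun ε : Ioi (0 : ℝ) => (ε : ℝ)) K,
    isSubadditiveModulus_affineInf (fun ε => ε.2.le) hK0 fun ε hε => ?_,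
    fun a b => le_ciInf fun ε => hK ε a b⟩
  exact ⟨⟨ε / 2, half_pos hε⟩, half_lt_self hε⟩

noncomputable def mcShaneExtension {X : Type*} [PseudoMetricSpace X] (s : Set X) (f : s → ℝ)
    (ω : ℝ → ℝ) (x : X) : ℝ :=
  ⨅ a : s, f a + ω (dist x a)

section mcShaneExtension

variable {X : Type*} [PseudoMetricSpace X] {s : Set X} {f : s → ℝ} {ω : ℝ → ℝ}

lemma bddBelow_range_add_apply_dist (hω : IsSubadditiveModulus ω)
    (hf : ∀ a b : s, f a - f b ≤ ω (dist (a : X) b)) (x : X) :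
    BddBelow (range fun a : s => f a + ω (dist x a)) := by
  rcases isEmpty_or_nonempty s with hs | ⟨⟨b⟩⟩
  · simp [range_eq_empty]
  refine ⟨f b - ω (dist x b), forall_mem_range.mpr fun a => ?_⟩
  have := hω.apply_dist_le_add (b : X) x a
  rw [dist_comm (b : X) x] at this
  linarith [hf b a]

lemma mcShaneExtension_coe (hω : IsSubadditiveModulus ω)
    (hf : ∀ a b : s, f a - f b ≤ ω (dist (a : X) b)) (a : s) :
    mcShaneExtension s f ω a = f a := by
  have : Nonempty s := ⟨a⟩
  refine le_antisymm ?_ (le_ciInf fun b => by linarith [hf a b])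
  exact (ciInf_le (bddBelow_range_add_apply_dist hω hf a) a).trans_eq (by simp [hω.apply_zero])

lemma mcShaneExtension_sub_le (hω : IsSubadditiveModulus ω)
    (hf : ∀ a b : s, f a - f b ≤ ω (dist (a : X) b)) (x y : X) :
    mcShaneExtension s f ω x - mcShaneExtension s f ω y ≤ ω (dist x y) := by
  rcases isEmpty_or_nonempty s with hs | hs
  · simpa [mcShaneExtension] using hω.nonneg _ dist_nonneg
  rw [sub_le_comm]
  refine le_ciInf fun a => ?_
  have := ciInf_le (bddBelow_range_add_apply_dist hω hf x) a
  have := hω.apply_dist_le_add x y a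
  simp only [mcShaneExtension] at *
  linarith

lemma dist_mcShaneExtension_le (hω : IsSubadditiveModulus ω)
    (hf : ∀ a b : s, f a - f b ≤ ω (dist (a : X) b)) (x y : X) :
    dist (mcShaneExtension s f ω x) (mcShaneExtension s f ω y) ≤ ω (dist x y) := by
  rw [Real.dist_eq, abs_sub_le_iff]
  exact ⟨mcShaneExtension_sub_le hω hf x y, dist_comm x y ▸ mcShaneExtension_sub_le hω hf y x⟩

end mcShaneExtension

/-- McShane-type extension: every bounded uniformly continuous real-valued
function on a subset `A` of a metric space `X` extends to a bounded uniformly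
continuous function on all of `X`. -/
theorem exists_bounded_uniformContinuous_extension {X : Type*} [MetricSpace X]
    (A : Set X) (f₀ : A → ℝ) (huc : UniformContinuous f₀)
    (hbd : ∃ C : ℝ, ∀ a : A, |f₀ a| ≤ C) :
    ∃ f : X → ℝ, UniformContinuous f ∧ (∃ C : ℝ, ∀ x : X, |f x| ≤ C) ∧
      ∀ a : A, f a = f₀ a := by
  obtain ⟨C, hC⟩ := hbd
  obtain ⟨ω, hω, hf₀⟩ := huc.exists_isSubadditiveModulus (D := 2 * C) fun a b => by
    linarith [(abs_le.mp (hC a)).2, (abs_le.mp (hC b)).1]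
  have hg := hω.uniformContinuous_of_dist_le (dist_mcShaneExtension_le hω hf₀)
  refine ⟨fun x => max (-C) (min C (mcShaneExtension A f₀ ω x)),
    ((LipschitzWith.id.const_min C).const_max (-C)).uniformContinuous.comp hg,
    ⟨|C|, fun x => abs_le.mpr ⟨?_, ?_⟩⟩, fun a => ?_⟩ <;> beta_reduce
  · linarith [le_abs_self C, le_max_left (-C) (min C (mcShaneExtension A f₀ ω x))]
  · exact max_le (neg_le_abs C) ((min_le_left _ _).trans (le_abs_self C))
  · rw [mcShaneExtension_coe hω hf₀ a, min_eq_right (abs_le.mp (hC a)).2,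
      max_eq_right (abs_le.mp (hC a)).1]
end

section
/- Let X be the subset of ℓ² given by X = B ∪ {(1 + m/n)·e_n : n ∈ ℕ, m = 1, …, n}, where B is the closed unit ball of ℓ² and (e_n) is the standard orthonormal basis. Then X, with the metric induced from ℓ², is a Bourbaki-bounded metric space, i.e., every uniformly continuous real-valued function on X is bounded. -/
/-!
Fix `δ > 0` with `|f x - f y| < 1` whenever `dist x y < δ`, and put `K = ⌈4/δ⌉₊`. Every point
`x` of the ball is joined to `0` by the `δ`-chain `(k/K) • x`, `k ≤ K`. A spike point
`(1 + m/n) • e n` with `nδ > 2` lies on the grid `(k/n) • e n`, `k ≤ 2n`, which stays in `X`;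
jumping `⌈nδ/2⌉₊` grid points at a time joins it to `0` in at most `K` steps of length `< δ`.
So `f` differs from `f 0` by at most `K` outside the finitely many spike points with `nδ ≤ 2`.
-/

/-- The space `ℓ²` of square-summable real sequences. -/
noncomputable abbrev ellTwo : Type := lp (fun _ : ℕ => ℝ) 2

/-- The `n`-th standard basis vector of `ℓ²`. -/
noncomputable def e (n : ℕ) : ellTwo := lp.single 2 n (1 : ℝ)

/-- The subset `X = B ∪ {(1 + m/n) e_n : n ∈ ℕ, 1 ≤ m ≤ n}` of `ℓ²`, where `B`
is the closed unit ball. -/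
noncomputable def XSet : Set ellTwo :=
  Metric.closedBall 0 1 ∪
    {z : ellTwo | ∃ n m : ℕ, 1 ≤ m ∧ m ≤ n ∧ z = (1 + (m : ℝ) / n) • e n}

open Set Metric

lemma dist_le_mul_of_chain {α β : Type*} [PseudoMetricSpace α] [PseudoMetricSpace β]
    {s : Set α} {F : α → β} {δ ε : ℝ}
    (hF : ∀ x ∈ s, ∀ y ∈ s, dist x y < δ → dist (F x) (F y) < ε)
    (p : ℕ → α) (K : ℕ) (hps : ∀ j ≤ K, p j ∈ s) (hp : ∀ j < K, dist (p j) (p (j + 1)) < δ) :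
    dist (F (p 0)) (F (p K)) ≤ K * ε :=
  calc dist (F (p 0)) (F (p K))
      ≤ ∑ j ∈ Finset.range K, dist (F (p j)) (F (p (j + 1))) := dist_le_range_sum_dist (F ∘ p) K
    _ ≤ ∑ _j ∈ Finset.range K, ε := by
        refine Finset.sum_le_sum fun j hj => (hF _ (hps j ?_) _ (hps (j + 1) ?_) (hp j ?_)).le <;>
          simp only [Finset.mem_range] at hj <;> omega
    _ = K * ε := by simp

/-- The grid `(k/n) • v`, `k ≤ M`, is traversed from `0` in `K` jumps of `step` grid points. -/
lemma dist_le_mul_of_grid {E β : Type*} [NormedAddCommGroup E] [NormedSpace ℝ E]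
    [PseudoMetricSpace β] {s : Set E} {F : E → β} {δ ε : ℝ}
    (hF : ∀ x ∈ s, ∀ y ∈ s, dist x y < δ → dist (F x) (F y) < ε)
    {v : E} {n M step K : ℕ} (hgrid : ∀ k ≤ M, ((k : ℝ) / n) • v ∈ s)
    (hstep : (step : ℝ) / n * ‖v‖ < δ) (hM : M ≤ K * step) :
    dist (F 0) (F (((M : ℝ) / n) • v)) ≤ K * ε := by
  have hchain := dist_le_mul_of_chain hF (fun j => ((min (j * step) M : ℕ) / (n : ℝ)) • v) K
    (fun j _ => hgrid _ (min_le_right _ _)) fun j _ => by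
      rw [dist_eq_norm, ← sub_smul, norm_smul, ← sub_div, Real.norm_eq_abs, abs_div,
        Nat.abs_cast, abs_sub_comm]
      refine lt_of_le_of_lt (mul_le_mul_of_nonneg_right ?_ (norm_nonneg v)) hstep
      gcongr
      rw [abs_of_nonneg (sub_nonneg.2 (by gcongr; lia))]
      have : min ((j + 1) * step) M ≤ min (j * step) M + step := by
        rw [add_mul, one_mul]; lia
      exact sub_le_iff_le_add'.2 (by exact_mod_cast this)
  simpa [min_eq_right hM] using hchain

lemma norm_e (n : ℕ) : ‖e n‖ = 1 := by
  simp [e, lp.norm_single (E := fun _ : ℕ => ℝ) (p := 2)]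

lemma mem_XSet_of_norm_le {x : ellTwo} (hx : ‖x‖ ≤ 1) : x ∈ XSet :=
  Or.inl (mem_closedBall_zero_iff.2 hx)

lemma div_smul_e_mem_XSet {n k : ℕ} (hk : k ≤ 2 * n) : ((k : ℝ) / n) • e n ∈ XSet := by
  rcases le_or_gt k n with hkn | hnk
  · refine mem_XSet_of_norm_le ?_
    rw [norm_smul, norm_e, mul_one, Real.norm_eq_abs, abs_of_nonneg (by positivity)]
    exact div_le_one_of_le₀ (by exact_mod_cast hkn) (Nat.cast_nonneg n)
  · refine Or.inr ⟨n, k - n, by lia, by lia, ?_⟩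
    have hn : (n : ℝ) ≠ 0 := by exact_mod_cast (show n ≠ 0 by lia)
    rw [Nat.cast_sub hnk.le, sub_div, div_self hn, add_sub_cancel]

/-- Contains the spike points `(1 + m/n) • e n` with `n ≤ N`; it is finite, which is all that
matters, so the indexing may also produce some points `m > n` outside `X`. -/
noncomputable def smallSpike (N : ℕ) (p : Fin (N + 1) × Fin (N + 1)) : ellTwo :=
  (1 + (p.2 : ℝ) / p.1) • e p.1

lemma XSet_subset_range_smallSpike_union {β : Type*} [PseudoMetricSpace β] {F : ellTwo → β}
    {δ : ℝ} (hδ : 0 < δ)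
    (hF : ∀ x ∈ XSet, ∀ y ∈ XSet, dist x y < δ → dist (F x) (F y) < 1) :
    XSet ⊆ range (smallSpike ⌈2 / δ⌉₊) ∪ {x | dist (F 0) (F x) ≤ ⌈4 / δ⌉₊} := by
  set K := ⌈4 / δ⌉₊
  have hKδ : 4 ≤ (K : ℝ) * δ := (div_le_iff₀ hδ).1 (Nat.le_ceil _)
  have hK : (K : ℝ) ≠ 0 := by rintro h; rw [h, zero_mul] at hKδ; norm_num at hKδ
  rintro x (hx | ⟨n, m, -, hmn, rfl⟩)
  · right
    have hx : ‖x‖ ≤ 1 := mem_closedBall_zero_iff.1 hx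
    have := dist_le_mul_of_grid hF (v := x) (n := K) (M := K) (step := 1) (K := K)
      (fun k hk => mem_XSet_of_norm_le (by
        rw [norm_smul, Real.norm_eq_abs, abs_of_nonneg (by positivity)]
        exact mul_le_one₀ (div_le_one_of_le₀ (by exact_mod_cast hk) (by positivity))
          (norm_nonneg x) hx))
      (by
        rw [Nat.cast_one, one_div, inv_mul_lt_iff₀ (by positivity)]
        nlinarith [norm_nonneg x])
      (by lia)
    simpa [div_self hK] using this
  rcases le_or_gt n ⌈2 / δ⌉₊ with hn | hn
  · exact Or.inl ⟨(⟨n, by lia⟩, ⟨m, by lia⟩), rfl⟩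
  right
  have hnδ : 2 < (n : ℝ) * δ := (div_lt_iff₀ hδ).1 (Nat.lt_of_ceil_lt hn)
  have hn0 : (n : ℝ) ≠ 0 := by rintro h; rw [h, zero_mul] at hnδ; norm_num at hnδ
  set step := ⌈(n : ℝ) * δ / 2⌉₊
  have hstep_ge : (n : ℝ) * δ / 2 ≤ step := Nat.le_ceil _
  have hstep_lt : (step : ℝ) < n * δ / 2 + 1 := Nat.ceil_lt_add_one (by positivity)
  have := dist_le_mul_of_grid hF (v := e n) (n := n) (M := n + m) (step := step) (K := K)
    (fun k hk => div_smul_e_mem_XSet (by lia))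
    (by
      rw [norm_e, mul_one, div_lt_iff₀ (by positivity)]
      linarith)
    (by
      have hm : (m : ℝ) ≤ n := by exact_mod_cast hmn
      have : ((n + m : ℕ) : ℝ) ≤ K * step := by push_cast; nlinarith
      exact_mod_cast this)
  simpa [add_div, div_self hn0] using this

lemma isBounded_image_XSet_of_uniformContinuousOn {β : Type*} [PseudoMetricSpace β]
    {F : ellTwo → β}
    (hF : UniformContinuousOn F XSet) : Bornology.IsBounded (F '' XSet) := by
  obtain ⟨δ, hδ, hFδ⟩ := Metric.uniformContinuousOn_iff.1 hF 1 one_pos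
  refine (((finite_range (smallSpike ⌈2 / δ⌉₊)).image F).isBounded.union
    (isBounded_closedBall (x := F 0) (r := ⌈4 / δ⌉₊))).subset ?_
  rintro _ ⟨x, hx, rfl⟩
  rcases XSet_subset_range_smallSpike_union hδ hFδ hx with hx | hx
  · exact Or.inl (mem_image_of_mem F hx)
  · exact Or.inr (mem_closedBall_comm.1 hx)

/-- `X`, with the metric induced from `ℓ²`, is Bourbaki-bounded: every
uniformly continuous real-valued function on `X` is bounded. -/
theorem XSet_bourbakiBounded :
    ∀ f : XSet → ℝ, UniformContinuous f → ∃ C : ℝ, ∀ z : XSet, |f z| ≤ C := by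
  intro f hf
  set F : ellTwo → ℝ := Function.extend Subtype.val f 0
  have hFf : XSet.domRestrict F = f := funext (Subtype.val_injective.extend_apply f 0)
  have hF : UniformContinuousOn F XSet := uniformContinuousOn_iff_restrict.2 (hFf ▸ hf)
  obtain ⟨C, hC⟩ :=
    isBounded_iff_forall_norm_le.1 (isBounded_image_XSet_of_uniformContinuousOn hF)
  exact ⟨C, fun z => congrFun hFf z ▸ hC _ (mem_image_of_mem F z.2)⟩
end

section
/- A metric space (X,d) is Bourbaki-bounded (every uniformly continuous real-valued function on X is bounded) if and only if X is bounded with respect to every metric d' on X that is uniformly equivalent to d (i.e., such that the identity maps (X,d) → (X,d') and (X,d') → (X,d) are both uniformly continuous). -/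
/-!
If every uniformly continuous function is bounded, then so is `x ↦ d'(x, x₀)` for any metric
`d'` that is uniformly coarser than `d`, hence `d'` is bounded.
Conversely, a uniformly continuous `f` makes the metric of its graph, `max (d x y) |f x - f y|`,
uniformly equivalent to `d`; that metric being bounded bounds the oscillation of `f`.
-/

open Set Uniformity

def BourbakiBounded (X : Type*) [UniformSpace X] : Prop :=
  ∀ f : X → ℝ, UniformContinuous f → ∃ C : ℝ, ∀ x, |f x| ≤ C

namespace BourbakiBounded

theorem of_uniformContinuous_surjective {X Y : Type*} [UniformSpace X] [UniformSpace Y]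
    {g : X → Y} (hg : UniformContinuous g) (hsurj : g.Surjective) (hX : BourbakiBounded X) :
    BourbakiBounded Y := by
  intro f hf
  obtain ⟨C, hC⟩ := hX (f ∘ g) (hf.comp hg)
  exact ⟨C, hsurj.forall.mpr hC⟩

theorem exists_dist_le {X : Type*} [PseudoMetricSpace X] (hX : BourbakiBounded X) :
    ∃ C : ℝ, ∀ x y : X, dist x y ≤ C := by
  rcases isEmpty_or_nonempty X with _ | ⟨⟨x₀⟩⟩
  · exact ⟨0, fun x => isEmptyElim x⟩
  obtain ⟨C, hC⟩ := hX (dist · x₀) (uniformContinuous_id.dist uniformContinuous_const)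
  exact ⟨C + C, fun x y => (dist_triangle_right x y x₀).trans
    (add_le_add (abs_le.mp (hC x)).2 (abs_le.mp (hC y)).2)⟩

end BourbakiBounded

namespace MetricSpace

variable {X Y : Type*} [m : MetricSpace X] [MetricSpace Y] {f : X → Y}

abbrev graph (f : X → Y) : MetricSpace X :=
  .induced (fun x => (x, f x)) (fun _ _ h => congrArg Prod.fst h) inferInstance

theorem uniformContinuous_id_graph (hf : UniformContinuous f) :
    UniformContinuous[m.toUniformSpace, (graph f).toUniformSpace] id :=
  uniformContinuous_comap' (uniformContinuous_id.prodMk hf)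

theorem uniformContinuous_graph_id :
    UniformContinuous[(graph f).toUniformSpace, m.toUniformSpace] id :=
  Filter.Tendsto.comp uniformContinuous_fst uniformContinuous_comap

theorem dist_le_graph_dist (x y : X) : dist (f x) (f y) ≤ @dist X (graph f).toDist x y :=
  le_max_right (dist x y) (dist (f x) (f y))

end MetricSpace

theorem exists_abs_le_of_forall_dist_le {X : Type*} {f : X → ℝ} {C : ℝ}
    (hC : ∀ x y, dist (f x) (f y) ≤ C) : ∃ C' : ℝ, ∀ x, |f x| ≤ C' := by
  obtain ⟨C', hC'⟩ :=
    isBounded_iff_forall_norm_le.mp (Metric.isBounded_range_iff.mpr ⟨C, hC⟩)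
  exact ⟨C', fun x => hC' (f x) (mem_range_self x)⟩

/-- A metric space `(X, d)` is Bourbaki-bounded (every uniformly continuous
real function is bounded) iff `X` has finite diameter with respect to every
metric `d'` on `X` uniformly equivalent to `d` (i.e. the identity map is
uniformly continuous in both directions). -/
theorem bourbakiBounded_iff_bounded_uniformly_equivalent {X : Type*} [m : MetricSpace X] :
    (∀ f : X → ℝ, UniformContinuous f → ∃ C : ℝ, ∀ x : X, |f x| ≤ C) ↔
    (∀ m' : MetricSpace X,
      @UniformContinuous X X m.toUniformSpace m'.toUniformSpace id →
      @UniformContinuous X X m'.toUniformSpace m.toUniformSpace id →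
      ∃ C : ℝ, ∀ x y : X, @dist X m'.toDist x y ≤ C) := by
  constructor
  · intro hX m' hid _
    exact @BourbakiBounded.exists_dist_le X m'.toPseudoMetricSpace
      (@BourbakiBounded.of_uniformContinuous_surjective X X m.toUniformSpace m'.toUniformSpace
        id hid Function.surjective_id hX)
  · intro hbounded f hf
    obtain ⟨C, hC⟩ := hbounded (MetricSpace.graph f) (MetricSpace.uniformContinuous_id_graph hf)
      MetricSpace.uniformContinuous_graph_id
    exact exists_abs_le_of_forall_dist_le fun x y =>
      (MetricSpace.dist_le_graph_dist x y).trans (hC x y)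
end

section
/- A metric space (X,d) is Bourbaki-bounded (every uniformly continuous real-valued function on X is bounded) if and only if every countable subset B ⊆ X is a Bourbaki-bounded subset of X, i.e., every uniformly continuous real-valued function on X is bounded on B. -/
theorem exists_forall_abs_le_of_forall_countable {α : Type*} (f : α → ℝ)
    (h : ∀ s : Set α, s.Countable → ∃ C : ℝ, ∀ x ∈ s, |f x| ≤ C) :
    ∃ C : ℝ, ∀ x, |f x| ≤ C := by
  by_contra! hunbounded
  choose g hg using fun n : ℕ => hunbounded n
  obtain ⟨C, hC⟩ := h (Set.range g) (Set.countable_range g)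
  obtain ⟨n, hn⟩ := exists_nat_gt C
  linarith [hC (g n) ⟨n, rfl⟩, hg n]

/-- A metric space `X` is Bourbaki-bounded iff every countable subset of `X`
is a Bourbaki-bounded subset of `X`. -/
theorem bourbakiBounded_iff_countable_subsets {X : Type*} [MetricSpace X] :
    (∀ f : X → ℝ, UniformContinuous f → ∃ C : ℝ, ∀ x : X, |f x| ≤ C) ↔
    (∀ B : Set X, B.Countable → IsBourbakiBoundedSubset B) := by
  constructor
  · exact fun h _ _ f hf => (h f hf).imp fun _ hC x _ => hC x
  · exact fun h f hf => exists_forall_abs_le_of_forall_countable f fun s hs => h s hs f hf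
end

section
/- A metric space (X,d) is Bourbaki-bounded (every uniformly continuous real-valued function on X is bounded) if and only if X is finitely chainable: for every γ > 0 there exist M₁, M₂ ∈ ℕ and points x₁, …, x_{M₁} ∈ X such that X = {x₁, …, x_{M₁}}^{M₂, γ}, where for A ⊆ X one defines A^{1,γ} = {x ∈ X : d(x,A) ≤ γ} and inductively A^{k,γ} = {x ∈ X : d(x, A^{k-1,γ}) ≤ γ}. -/
/-- The iterated `γ`-enlargements of a set: `enlarge γ A 0 = A` and
`enlarge γ A (k+1) = {x : d(x, enlarge γ A k) ≤ γ}`, where the distance to a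
set is computed in `[0,∞]` (so it is `∞` for the empty set). -/
def enlarge {X : Type*} [MetricSpace X] (γ : ℝ) (A : Set X) : ℕ → Set X
  | 0 => A
  | k + 1 => {x : X | EMetric.infEdist x (enlarge γ A k) ≤ ENNReal.ofReal γ}

/-!
Finitely chainable implies Bourbaki-bounded because a uniformly continuous `f` moves by less
than `1` along steps shorter than its modulus `δ`, so `f` is bounded on the `k`-th
`δ/2`-enlargement of a finite set.

Conversely fix `γ > 0`. If no finite set reaches every point through iterated
`γ`-enlargements, pick points `a₀, a₁, …` with `aₙ` unreachable from each earlier `aₘ`;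
then "the first `aⱼ` from which `x` is reachable" is constant at scale `γ` and unbounded.
If a finite `A` does reach every point, then with `Aᵏ = enlarge γ A k` the function
`x ↦ ∑ₖ min γ (d(x, Aᵏ))`, a smoothed version of `γ` times the least `k` with `x ∈ Aᵏ`, is
`2`-Lipschitz at scale `γ`: only the two terms near that least `k` can differ between close
points. Hence it is bounded, and so is the number of enlargements needed.
-/

open Set Metric Bornology

def IsBourbakiBounded (X : Type*) [PseudoMetricSpace X] : Prop :=
  ∀ f : X → ℝ, UniformContinuous f → ∃ C : ℝ, ∀ x : X, |f x| ≤ C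

theorem uniformContinuous_of_dist_le_mul {X Y : Type*} [PseudoMetricSpace X]
    [PseudoMetricSpace Y] {f : X → Y} {δ K : ℝ} (hδ : 0 < δ)
    (hf : ∀ x y, dist x y < δ → dist (f x) (f y) ≤ K * dist x y) : UniformContinuous f := by
  refine Metric.uniformContinuous_iff.2 fun ε hε => ⟨min δ (ε / (|K| + 1)), by positivity,
    fun {x y} hxy => ?_⟩
  have hK : 0 < |K| + 1 := by positivity
  have hsmall : (|K| + 1) * dist x y < ε :=
    (lt_div_iff₀' hK).1 (hxy.trans_le (min_le_right _ _))
  calc dist (f x) (f y) ≤ K * dist x y := hf x y (hxy.trans_le (min_le_left _ _))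
    _ ≤ (|K| + 1) * dist x y := by gcongr; linarith [le_abs_self K]
    _ < ε := hsmall

section Enlarge

variable {X : Type*} [MetricSpace X] {γ : ℝ} {A B : Set X} {k : ℕ} {x y : X}

theorem mem_enlarge_succ :
    x ∈ enlarge γ A (k + 1) ↔ infEDist x (enlarge γ A k) ≤ ENNReal.ofReal γ :=
  Iff.rfl

theorem mem_enlarge_succ_of_dist_le (hy : y ∈ enlarge γ A k) (hxy : dist x y ≤ γ) :
    x ∈ enlarge γ A (k + 1) :=
  (infEDist_le_edist_of_mem hy).trans (by rw [edist_dist]; exact ENNReal.ofReal_le_ofReal hxy)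

theorem enlarge_subset_enlarge (h : A ⊆ B) : ∀ k, enlarge γ A k ⊆ enlarge γ B k
  | 0 => h
  | k + 1 => fun _ hx => (infEDist_anti (enlarge_subset_enlarge h k)).trans hx

theorem monotone_enlarge (hγ : 0 ≤ γ) (A : Set X) : Monotone (enlarge γ A) :=
  monotone_nat_of_le_succ fun _ _ hx => mem_enlarge_succ_of_dist_le hx (by simpa using hγ)

theorem enlarge_empty : ∀ k, enlarge γ (∅ : Set X) k = ∅
  | 0 => rfl
  | k + 1 => by ext x; simp [mem_enlarge_succ, enlarge_empty k]

theorem exists_mem_enlarge_iff_of_dist_le (hxy : dist x y ≤ γ) :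
    (∃ k, x ∈ enlarge γ A k) ↔ ∃ k, y ∈ enlarge γ A k :=
  ⟨fun ⟨k, hk⟩ => ⟨k + 1, mem_enlarge_succ_of_dist_le hk (by rwa [dist_comm])⟩,
    fun ⟨k, hk⟩ => ⟨k + 1, mem_enlarge_succ_of_dist_le hk hxy⟩⟩

theorem isBounded_image_enlarge {Y : Type*} [PseudoMetricSpace Y] {f : X → Y} {ε δ : ℝ}
    (hf : ∀ x y, dist x y < δ → dist (f x) (f y) < ε) (hδ : 0 < δ) (hγδ : γ < δ)
    (hA : IsBounded (f '' A)) : ∀ k, IsBounded (f '' enlarge γ A k)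
  | 0 => hA
  | k + 1 => by
    refine ((isBounded_image_enlarge hf hδ hγδ hA k).thickening (δ := ε)).subset ?_
    rintro _ ⟨x, hx, rfl⟩
    have hlt : infEDist x (enlarge γ A k) < ENNReal.ofReal δ :=
      (mem_enlarge_succ.1 hx).trans_lt ((ENNReal.ofReal_lt_ofReal_iff hδ).2 hγδ)
    obtain ⟨y, hy, hxy⟩ := infEDist_lt_iff.1 hlt
    exact mem_thickening_iff.2 ⟨f y, mem_image_of_mem f hy, hf x y (edist_lt_ofReal.1 hxy)⟩

end Enlarge

section Depth

variable {X : Type*} [MetricSpace X] {γ : ℝ} {A : Set X} {j k m n : ℕ} {x y : X}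

noncomputable def enlargeDepth (γ : ℝ) (A : Set X) (x : X) : ℝ :=
  ∑' k, min γ (infDist x (enlarge γ A k))

theorem min_infDist_enlarge_of_notMem (hA : A.Nonempty) (hγ : 0 ≤ γ)
    (hx : x ∉ enlarge γ A (k + 1)) : min γ (infDist x (enlarge γ A k)) = γ := by
  have hne : infEDist x (enlarge γ A k) ≠ ⊤ :=
    infEDist_ne_top (hA.mono (monotone_enlarge hγ A k.zero_le))
  rw [min_eq_left_iff, infDist, ← ENNReal.ofReal_le_iff_le_toReal hne]
  exact (not_le.1 hx).le

theorem min_infDist_enlarge_of_mem (hγ : 0 ≤ γ) (hx : x ∈ enlarge γ A j) (hjk : j ≤ k) :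
    min γ (infDist x (enlarge γ A k)) = 0 := by
  rw [infDist_zero_of_mem (monotone_enlarge hγ A hjk hx), min_eq_right hγ]

theorem enlargeDepth_eq_sum (hγ : 0 ≤ γ) (hx : x ∈ enlarge γ A n) :
    enlargeDepth γ A x = ∑ k ∈ Finset.range n, min γ (infDist x (enlarge γ A k)) :=
  tsum_eq_sum fun _ hk => min_infDist_enlarge_of_mem hγ hx (by simpa using hk)

theorem mul_le_enlargeDepth (hA : A.Nonempty) (hγ : 0 ≤ γ) (hx : x ∉ enlarge γ A m)
    (hn : x ∈ enlarge γ A n) : m * γ ≤ enlargeDepth γ A x := by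
  have hmn : m ≤ n := by
    by_contra! h
    exact hx (monotone_enlarge hγ A h.le hn)
  rw [enlargeDepth_eq_sum hγ hn]
  calc (m : ℝ) * γ = ∑ k ∈ Finset.range m, min γ (infDist x (enlarge γ A k)) := by
        rw [Finset.sum_congr rfl fun k hk => min_infDist_enlarge_of_notMem hA hγ fun hxk =>
          hx (monotone_enlarge hγ A (Finset.mem_range.1 hk) hxk)]
        simp
    _ ≤ _ := Finset.sum_le_sum_of_subset_of_nonneg (Finset.range_mono hmn)
        fun _ _ _ => le_min hγ infDist_nonneg

theorem enlargeDepth_le_add (hA : A.Nonempty) (hγ : 0 ≤ γ) (hxy : dist x y ≤ γ)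
    (hy : ∃ n, y ∈ enlarge γ A n) :
    enlargeDepth γ A x ≤ enlargeDepth γ A y + 2 * dist x y := by
  have hv : ∀ k, min γ (infDist x (enlarge γ A k)) ≤
      min γ (infDist y (enlarge γ A k)) + dist x y := fun k => by
    have := infDist_le_infDist_add_dist (x := x) (y := y) (s := enlarge γ A k)
    have := dist_nonneg (x := x) (y := y)
    simp only [min_def]
    split_ifs <;> linarith
  classical
  obtain ⟨n₀, hyn₀, hmin⟩ : ∃ n₀, y ∈ enlarge γ A n₀ ∧ ∀ k < n₀, y ∉ enlarge γ A k :=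
    ⟨Nat.find hy, Nat.find_spec hy, fun _ => Nat.find_min hy⟩
  rw [enlargeDepth_eq_sum hγ (mem_enlarge_succ_of_dist_le hyn₀ hxy),
    enlargeDepth_eq_sum hγ (monotone_enlarge hγ A n₀.le_succ hyn₀)]
  cases n₀ with
  | zero => simpa using (hv 0).trans (by linarith [dist_nonneg (x := x) (y := y)])
  | succ i =>
    have hfar : ∑ k ∈ Finset.range i, min γ (infDist x (enlarge γ A k)) ≤
        ∑ k ∈ Finset.range i, min γ (infDist y (enlarge γ A k)) :=
      Finset.sum_le_sum fun k hk => by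
        rw [min_infDist_enlarge_of_notMem hA hγ (hmin (k + 1) (by simp at hk; omega))]
        exact min_le_left _ _
    simp only [Finset.sum_range_succ]
    linarith [hv i, hv (i + 1), min_infDist_enlarge_of_mem hγ hyn₀ (le_refl (i + 1))]

theorem uniformContinuous_enlargeDepth (hA : A.Nonempty) (hγ : 0 < γ)
    (hreach : ∀ x, ∃ n, x ∈ enlarge γ A n) : UniformContinuous (enlargeDepth γ A) :=
  uniformContinuous_of_dist_le_mul (K := 2) hγ fun x y hxy => by
    rw [Real.dist_eq, abs_sub_le_iff]
    constructor
    · linarith [enlargeDepth_le_add hA hγ.le hxy.le (hreach y)]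
    · linarith [enlargeDepth_le_add hA hγ.le (dist_comm x y ▸ hxy.le) (hreach x), dist_comm x y]

theorem exists_enlarge_eq_univ (hγ : 0 < γ) (hX : IsBourbakiBounded X)
    (hreach : ∀ x, ∃ n, x ∈ enlarge γ A n) : ∃ m, enlarge γ A m = univ := by
  rcases A.eq_empty_or_nonempty with rfl | hA
  · refine ⟨0, eq_univ_of_forall fun x => ?_⟩
    obtain ⟨n, hn⟩ := hreach x
    rw [enlarge_empty] at hn
    exact hn.elim
  obtain ⟨C, hC⟩ := hX _ (uniformContinuous_enlargeDepth hA hγ hreach)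
  refine ⟨⌈C / γ⌉₊ + 1, eq_univ_of_forall fun x => ?_⟩
  by_contra hx
  obtain ⟨n, hn⟩ := hreach x
  have hdepth := (mul_le_enlargeDepth hA hγ.le hx hn).trans ((le_abs_self _).trans (hC x))
  have hceil := (div_le_iff₀ hγ).1 (Nat.le_ceil (C / γ))
  push_cast at hdepth
  linarith

end Depth

section ReachIndex

variable {X : Type*} [MetricSpace X] {γ : ℝ} {a : ℕ → X} {n : ℕ} {x y : X}

noncomputable def reachIndex (γ : ℝ) (a : ℕ → X) (x : X) : ℕ :=
  sInf {j | ∃ k, x ∈ enlarge γ {a j} k}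

theorem reachIndex_eq_of_dist_le (hxy : dist x y ≤ γ) : reachIndex γ a x = reachIndex γ a y := by
  simp only [reachIndex, exists_mem_enlarge_iff_of_dist_le hxy]

theorem le_reachIndex (ha : ∀ m < n, ∀ k, a n ∉ enlarge γ {a m} k) :
    n ≤ reachIndex γ a (a n) :=
  le_csInf ⟨n, 0, rfl⟩ fun _ ⟨k, hk⟩ => not_lt.1 fun hj => ha _ hj k hk

theorem uniformContinuous_reachIndex (hγ : 0 < γ) :
    UniformContinuous fun x => (reachIndex γ a x : ℝ) :=
  uniformContinuous_of_dist_le_mul (K := 0) hγ fun x y hxy => by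
    simp [reachIndex_eq_of_dist_le (a := a) hxy.le]

theorem exists_finset_forall_exists_mem_enlarge (hγ : 0 < γ) (hX : IsBourbakiBounded X) :
    ∃ s : Finset X, ∀ x, ∃ k, x ∈ enlarge γ (s : Set X) k := by
  by_contra! h
  obtain ⟨a, -, ha⟩ := exists_seq_of_forall_finset_exists (fun _ => True)
    (fun y x => ∀ k, x ∉ enlarge γ {y} k) fun s _ =>
      let ⟨x, hx⟩ := h s
      ⟨x, trivial, fun y hy k hk => hx k (enlarge_subset_enlarge (singleton_subset_iff.2 hy) k hk)⟩
  obtain ⟨C, hC⟩ := hX _ (uniformContinuous_reachIndex (a := a) hγ)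
  have hbound := (le_abs_self _).trans (hC (a (⌈C⌉₊ + 1)))
  have hindex : ((⌈C⌉₊ + 1 : ℕ) : ℝ) ≤ reachIndex γ a (a (⌈C⌉₊ + 1)) :=
    Nat.cast_le.2 (le_reachIndex fun m hm => ha m _ hm)
  push_cast at hindex
  linarith [Nat.le_ceil C]

end ReachIndex

/-- A metric space `X` is Bourbaki-bounded (every uniformly continuous real
function is bounded) iff `X` is finitely chainable: for every `γ > 0` there
are finitely many points `x₁, …, x_{M₁}` and `M₂ ∈ ℕ` with
`X = {x₁, …, x_{M₁}}^{M₂, γ}`. -/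
theorem bourbakiBounded_iff_finitely_chainable {X : Type*} [MetricSpace X] :
    (∀ f : X → ℝ, UniformContinuous f → ∃ C : ℝ, ∀ x : X, |f x| ≤ C) ↔
    (∀ γ : ℝ, 0 < γ → ∃ (M₁ M₂ : ℕ) (x : Fin M₁ → X),
      (Set.univ : Set X) = enlarge γ (Set.range x) M₂) := by
  constructor
  · intro hX γ hγ
    obtain ⟨s, hs⟩ := exists_finset_forall_exists_mem_enlarge hγ hX
    obtain ⟨M₂, hM₂⟩ := exists_enlarge_eq_univ hγ hX hs
    obtain ⟨M₁, x, -, hx⟩ := s.finite_toSet.fin_param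
    exact ⟨M₁, M₂, x, by rw [hx, hM₂]⟩
  · intro hchain f hf
    obtain ⟨δ, hδ, hfδ⟩ := Metric.uniformContinuous_iff.1 hf 1 one_pos
    obtain ⟨M₁, M₂, x, hx⟩ := hchain (δ / 2) (half_pos hδ)
    have hrange : IsBounded (range f) := by
      rw [← image_univ, hx]
      exact isBounded_image_enlarge (fun _ _ h => hfδ h) hδ (half_lt_self hδ)
        ((finite_range x).image f).isBounded M₂
    obtain ⟨C, hC⟩ := isBounded_iff_forall_norm_le.1 hrange
    exact ⟨C, fun y => hC _ (mem_range_self y)⟩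
end

section
/- Let (X,d) be a metric space and A ⊆ X. Then A is a Bourbaki-bounded subset of X (every uniformly continuous real-valued function on X is bounded on A) if and only if A is bounded with respect to every metric d' on X that is uniformly equivalent to d (i.e., such that the identity maps (X,d) → (X,d') and (X,d') → (X,d) are both uniformly continuous). -/
/-!
A uniformly equivalent metric `d'` makes `x ↦ d'(a, x)` uniformly continuous for `d`, so a
Bourbaki-bounded set has finite `d'`-diameter. Conversely, a uniformly continuous `f : X → ℝ` is
`1`-Lipschitz for the uniformly equivalent metric `max (d x y) |f x - f y|` (the metric pulled
back along the graph `x ↦ (x, f x)`), so it is bounded on every set bounded for that metric.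
-/

open Bornology Metric

section

variable {X : Type*}

theorem isBounded_image_of_forall_uniformContinuous_real {Y : Type*} [UniformSpace X]
    [PseudoMetricSpace Y] {A : Set X}
    (hA : ∀ f : X → ℝ, UniformContinuous f → IsBounded (f '' A))
    {g : X → Y} (hg : UniformContinuous g) : IsBounded (g '' A) := by
  rcases A.eq_empty_or_nonempty with rfl | ⟨a, ha⟩
  · simp
  obtain ⟨C, hC⟩ := (hA _ (uniformContinuous_const.dist hg)).exists_norm_le
  refine (isBounded_iff_subset_closedBall (g a)).2 ⟨C, ?_⟩
  rintro _ ⟨x, hx, rfl⟩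
  simpa [dist_comm] using hC _ ⟨x, hx, rfl⟩

variable [MetricSpace X]

abbrev graphMetric (f : X → ℝ) : MetricSpace X :=
  .induced (fun x ↦ (x, f x)) (fun _ _ h ↦ congrArg Prod.fst h) inferInstance

theorem uniformContinuous_id_graphMetric {f : X → ℝ} (hf : UniformContinuous f) :
    @UniformContinuous X X _ (graphMetric f).toUniformSpace id :=
  uniformContinuous_comap' (uniformContinuous_id.prodMk hf)

theorem uniformContinuous_id_of_graphMetric (f : X → ℝ) :
    @UniformContinuous X X (graphMetric f).toUniformSpace _ id :=
  @UniformContinuous.comp X (X × ℝ) X (graphMetric f).toUniformSpace _ _ _ _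
    uniformContinuous_fst uniformContinuous_comap

theorem lipschitzWith_one_graphMetric (f : X → ℝ) :
    @LipschitzWith X ℝ (graphMetric f).toPseudoEMetricSpace _ 1 f :=
  @LipschitzWith.mk_one X ℝ (graphMetric f).toPseudoMetricSpace _ f fun x y ↦
    le_max_right (dist x y) (dist (f x) (f y))

end

/-- `A ⊆ X` is a Bourbaki-bounded subset of `(X, d)` (every uniformly
continuous real function on `X` is bounded on `A`) iff `A` has finite
diameter with respect to every metric `d'` on `X` uniformly equivalent to `d`
(i.e. the identity map is uniformly continuous in both directions). -/
theorem bourbakiBoundedSubset_iff_bounded_uniformly_equivalent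
    {X : Type*} [m : MetricSpace X] (A : Set X) :
    (∀ f : X → ℝ, UniformContinuous f → ∃ C : ℝ, ∀ x ∈ A, |f x| ≤ C) ↔
    (∀ m' : MetricSpace X,
      @UniformContinuous X X m.toUniformSpace m'.toUniformSpace id →
      @UniformContinuous X X m'.toUniformSpace m.toUniformSpace id →
      ∃ C : ℝ, ∀ x ∈ A, ∀ y ∈ A, @dist X m'.toDist x y ≤ C) := by
  have bounded_iff (f : X → ℝ) :
      (∃ C : ℝ, ∀ x ∈ A, |f x| ≤ C) ↔ IsBounded (f '' A) := by
    simp [isBounded_iff_forall_norm_le]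
  simp only [bounded_iff, ← isBounded_iff]
  constructor
  · intro hA m' hid _
    simpa using @isBounded_image_of_forall_uniformContinuous_real X X m.toUniformSpace
      m'.toPseudoMetricSpace A hA id hid
  · intro hA f hf
    exact @LipschitzWith.isBounded_image X ℝ (graphMetric f).toPseudoMetricSpace _ 1 f
      (lipschitzWith_one_graphMetric f) A
      (hA (graphMetric f) (uniformContinuous_id_graphMetric hf)
        (uniformContinuous_id_of_graphMetric f))
end

section
/- Let (X,d) be a metric space and A ⊆ X. Then A is a Bourbaki-bounded subset of X (every uniformly continuous real-valued function on X is bounded on A) if and only if every countable subset B ⊆ A is a Bourbaki-bounded subset of X. -/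
theorem IsBourbakiBoundedSubset.mono {X : Type*} [MetricSpace X] {A B : Set X}
    (hA : IsBourbakiBoundedSubset A) (hBA : B ⊆ A) : IsBourbakiBoundedSubset B := by
  intro f hf
  obtain ⟨C, hC⟩ := hA f hf
  exact ⟨C, fun x hx => hC x (hBA hx)⟩

theorem exists_upper_bound_iff_countable_subsets {α : Type*} (g : α → ℝ) (A : Set α) :
    (∃ C, ∀ x ∈ A, g x ≤ C) ↔ ∀ B ⊆ A, B.Countable → ∃ C, ∀ x ∈ B, g x ≤ C := by
  refine ⟨fun ⟨C, hC⟩ B hBA _ => ⟨C, fun x hx => hC x (hBA hx)⟩, fun h => ?_⟩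
  by_contra! hunbdd
  choose x hxA hgx using fun n : ℕ => hunbdd n
  obtain ⟨C, hC⟩ := h (Set.range x) (Set.range_subset_iff.2 hxA) (Set.countable_range x)
  obtain ⟨n, hn⟩ := exists_nat_gt C
  linarith [hC (x n) (Set.mem_range_self n), hgx n]

/-- `A ⊆ X` is a Bourbaki-bounded subset of `X` iff every countable subset of
`A` is a Bourbaki-bounded subset of `X`. -/
theorem bourbakiBoundedSubset_iff_countable_subsets {X : Type*} [MetricSpace X] (A : Set X) :
    IsBourbakiBoundedSubset A ↔
    (∀ B ⊆ A, B.Countable → IsBourbakiBoundedSubset B) := by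
  refine ⟨fun hA B hBA _ => hA.mono hBA, fun h f hf => ?_⟩
  exact (exists_upper_bound_iff_countable_subsets (fun x => |f x|) A).2
    fun B hBA hB => h B hBA hB f hf
end
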